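/- Let G = C(α_1,…,α_{2k}) be a C-graph on n = α_1 + ⋯ + α_{2k} vertices with adjacency matrix A, and let Ψ(x) = det(xI − A) and Ψ_π(x) = det(xI − Q_π(G)) be the characteristic polynomials of A and of the quotient matrix Q_π(G). Then Ψ(x) = x^{∑_{i=1}^{k}(α_{2i} − 1)} · (x + 1)^{∑_{i=1}^{k}(α_{2i−1} − 1)} · Ψ_π(x). -/

import Mathlib

open Matrix BigOperators
open scoped Classical

/-- The equivalence splitting off the last cell of `Σ j : Fin (m+1), Fin (α j)`. -/
def splitLast (α : ℕ → ℕ) (m : ℕ) :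
    (Σ j : Fin (m + 1), Fin (α j.val)) ≃ (Σ j : Fin m, Fin (α j.val)) ⊕ Fin (α m) where
  toFun x :=
    if h : x.1.val < m then Sum.inl ⟨⟨x.1.val, h⟩, x.2⟩
    else Sum.inr (Fin.cast (congrArg α
      (Nat.le_antisymm (Nat.lt_succ_iff.mp x.1.isLt) (Nat.le_of_not_lt h))) x.2)
  invFun x :=
    match x with
    | Sum.inl y => ⟨⟨y.1.val, Nat.lt_succ_of_lt y.1.isLt⟩, y.2⟩
    | Sum.inr a => ⟨⟨m, Nat.lt_succ_self m⟩, a⟩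
  left_inv := by
    rintro ⟨⟨jv, hj⟩, a⟩
    by_cases h : jv < m
    · simp [h]
    · have hm : jv = m := Nat.le_antisymm (Nat.lt_succ_iff.mp hj) (Nat.le_of_not_lt h)
      subst hm
      simp [h, Fin.cast]
  right_inv := by
    rintro (⟨⟨jv, hj⟩, a⟩ | a)
    · simp [hj]
    · simp [Fin.cast]

/-- The cograph `C(α 0, α 1, …, α (m-1))` (1-indexed in the paper: `C(α_1,…,α_m)`),
defined recursively: `C(α_1)` is the complement of the complete graph `K_{α_1}`, and
`C(α_1,…,α_i)` is the complement of the disjoint union of `C(α_1,…,α_{i-1})` and `K_{α_i}`.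
The vertices added at step `j` (the cell `C_j`) are the pairs `⟨j, a⟩`. -/
def cographC (α : ℕ → ℕ) : (m : ℕ) → SimpleGraph (Σ j : Fin m, Fin (α j.val))
  | 0 => ⊥
  | m + 1 =>
      SimpleGraph.comap (splitLast α m)
        ((cographC α m ⊕g (⊤ : SimpleGraph (Fin (α m))))ᶜ)

/-- The real adjacency matrix of a finite simple graph. -/
noncomputable def adjMat {V : Type*} [Fintype V] (G : SimpleGraph V) : Matrix V V ℝ :=
  Matrix.of fun u v => if G.Adj u v then (1 : ℝ) else 0

/-- The quotient matrix `Q_π(G)` of the C-graph `C(α 0, …, α (2k-1))`.  Rows and columns are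
indexed by `Fin (2*k)`; the paper's 1-based index `i` corresponds to `i.val + 1` here. -/
def quotientMatrix (α : ℕ → ℕ) (k : ℕ) : Matrix (Fin (2 * k)) (Fin (2 * k)) ℝ :=
  Matrix.of fun i j =>
    if i = j then (if Odd (i.val + 1) then (α i.val : ℝ) - 1 else 0)
    else if (Even (i.val + 1) ∧ j.val < i.val) ∨ (Even (j.val + 1) ∧ i.val < j.val)
      then (α j.val : ℝ) else 0

/-!
Distinct vertices in cells `i` and `j` of `C(α_0,…,α_{m-1})` are adjacent exactly when `m + i` is
even (if `i = j`) or `m + max i j` is odd (if `i ≠ j`): each recursion step complements the old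
graph, flipping these parities, and joins the new cell to everything. So the adjacency matrix is a
blow-up `A = P F Pᵀ - D` of a cell-level matrix `F`, where `P` is the cell indicator matrix and `D`
is diagonal and constant on cells. Then `A P = P Q` with `Q = F · diag α - diag d` the quotient
matrix, and each vector `e_v` for a non-leading vertex `v` of cell `i` is mapped to
`-d_i e_v` modulo the span of the cell indicators. In the basis of cell indicators and
non-leading vertices `A` is therefore block triangular, with diagonal blocks `Q` and
`diag(-d_i)` repeated `α_i - 1` times; `d_i` is `1` on clique cells and `0` on independent cells.
-/

open Polynomial

theorem Matrix.charpoly_eq_of_mul_eq_mul {R m n : Type*} [CommRing R] [Fintype m] [DecidableEq m]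
    [Fintype n] [DecidableEq n] (hcard : Fintype.card m = Fintype.card n) {A : Matrix m m R}
    {M : Matrix n n R} {T : Matrix m n R} {S : Matrix n m R} (hST : S * T = 1)
    (hAT : A * T = T * M) : A.charpoly = M.charpoly := by
  have hTS : T * S = 1 := (mul_eq_one_comm_of_card_eq n m R hcard.symm).mp hST
  have h := charpoly_mul_comm' T (S * A)
  rw [← Matrix.mul_assoc, hTS, Matrix.one_mul, Matrix.mul_assoc, hAT, ← Matrix.mul_assoc, hST,
    Matrix.one_mul, hcard] at h
  exact (isRegular_X_pow _).left.eq_iff.mp h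

section BlowUp

variable (R : Type*) [CommRing R] {ι : Type*} (β : ι → ℕ)

def succVertex (w : Σ i, Fin (β i - 1)) : Σ i, Fin (β i) := ⟨w.1, ⟨w.2 + 1, by omega⟩⟩

def leadVertex (hβ : ∀ i, 0 < β i) (i : ι) : Σ i, Fin (β i) := ⟨i, ⟨0, hβ i⟩⟩

lemma succVertex_injective : Function.Injective (succVertex β) := by
  rintro ⟨i, a⟩ ⟨j, b⟩ h
  simp only [succVertex, Sigma.mk.injEq] at h
  obtain ⟨rfl, h⟩ := h
  simp_all [Fin.ext_iff]

lemma leadVertex_ne_succVertex (hβ : ∀ i, 0 < β i) (i : ι) (w : Σ i, Fin (β i - 1)) :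
    leadVertex β hβ i ≠ succVertex β w := by
  simp only [leadVertex, succVertex, ne_eq, Sigma.mk.injEq, not_and]
  rintro rfl h
  simp [Fin.ext_iff] at h

variable [Fintype ι]

lemma card_sigma_eq_card_sum_pred (hβ : ∀ i, 0 < β i) :
    Fintype.card (Σ i, Fin (β i)) = Fintype.card (ι ⊕ Σ i, Fin (β i - 1)) := by
  simp only [Fintype.card_sigma, Fintype.card_sum, Fintype.card_fin]
  rw [← Finset.card_univ, Finset.card_eq_sum_ones, ← Finset.sum_add_distrib]
  exact Finset.sum_congr rfl fun i _ => by have := hβ i; omega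

variable [DecidableEq ι]

def cellIndicator : Matrix (Σ i, Fin (β i)) ι R := of fun u i => if u.1 = i then 1 else 0

lemma cellIndicator_transpose_mul_self :
    (cellIndicator R β)ᵀ * cellIndicator R β = diagonal fun i => (β i : R) := by
  ext i j
  rcases eq_or_ne i j with rfl | h
  · simp [cellIndicator, mul_apply, Fintype.sum_sigma]
  · simp [cellIndicator, mul_apply, Fintype.sum_sigma, h, Ne.symm h]

lemma diagonal_mul_cellIndicator (d : ι → R) :
    diagonal (fun u : Σ i, Fin (β i) => d u.1) * cellIndicator R β =
      cellIndicator R β * diagonal d := by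
  ext u j
  rw [diagonal_mul, mul_diagonal]
  by_cases h : u.1 = j <;> simp [cellIndicator, h]

lemma submatrix_fst_fst_eq_cellIndicator_mul (F : Matrix ι ι R) :
    F.submatrix (Sigma.fst : (Σ i, Fin (β i)) → ι) Sigma.fst =
      cellIndicator R β * F * (cellIndicator R β)ᵀ := by
  ext u v
  simp [cellIndicator, mul_apply]

def succInclusion : Matrix (Σ i, Fin (β i)) (Σ i, Fin (β i - 1)) R :=
  of fun u w => if u = succVertex β w then 1 else 0

def leadInclusion (hβ : ∀ i, 0 < β i) : Matrix (Σ i, Fin (β i)) ι R :=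
  of fun u i => if u = leadVertex β hβ i then 1 else 0

variable {κ : Type*}

lemma leadInclusion_transpose_mul (hβ : ∀ i, 0 < β i) (X : Matrix (Σ i, Fin (β i)) κ R) :
    (leadInclusion R β hβ)ᵀ * X = X.submatrix (leadVertex β hβ) id := by
  ext i j
  simp [leadInclusion, mul_apply]

lemma succInclusion_transpose_mul (X : Matrix (Σ i, Fin (β i)) κ R) :
    (succInclusion R β)ᵀ * X = X.submatrix (succVertex β) id := by
  ext i j
  simp [succInclusion, mul_apply]

lemma leadInclusion_transpose_mul_cellIndicator (hβ : ∀ i, 0 < β i) :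
    (leadInclusion R β hβ)ᵀ * cellIndicator R β = 1 := by
  ext i j
  simp [leadInclusion_transpose_mul, cellIndicator, leadVertex, one_apply]

lemma leadInclusion_transpose_mul_succInclusion (hβ : ∀ i, 0 < β i) :
    (leadInclusion R β hβ)ᵀ * succInclusion R β = 0 := by
  rw [leadInclusion_transpose_mul]
  ext i w
  simp [succInclusion, leadVertex_ne_succVertex]

lemma succInclusion_transpose_mul_self :
    (succInclusion R β)ᵀ * succInclusion R β = 1 := by
  rw [succInclusion_transpose_mul]
  ext w w'
  simp [succInclusion, one_apply, (succVertex_injective β).eq_iff]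

lemma diagonal_mul_succInclusion (d : ι → R) :
    diagonal (fun u : Σ i, Fin (β i) => d u.1) * succInclusion R β =
      succInclusion R β * diagonal fun w : Σ i, Fin (β i - 1) => d w.1 := by
  ext u w
  rw [diagonal_mul, mul_diagonal]
  rcases eq_or_ne u (succVertex β w) with rfl | h
  · simp [succInclusion, succVertex]
  · simp [succInclusion, h]

def blowUp (F : Matrix ι ι R) (d : ι → R) : Matrix (Σ i, Fin (β i)) (Σ i, Fin (β i)) R :=
  F.submatrix Sigma.fst Sigma.fst - diagonal fun u => d u.1

lemma charpoly_neg_diagonal_sigma (d : ι → R) :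
    (-diagonal fun w : Σ i, Fin (β i - 1) => d w.1).charpoly =
      ∏ i, (X + C (d i)) ^ (β i - 1) := by
  rw [diagonal_neg, charpoly_diagonal, Fintype.prod_sigma]
  simp [sub_eq_add_neg]

theorem charpoly_blowUp (hβ : ∀ i, 0 < β i) (F : Matrix ι ι R) (d : ι → R) :
    (blowUp R β F d).charpoly =
      (F * diagonal (fun i => (β i : R)) - diagonal d).charpoly *
        ∏ i, (X + C (d i)) ^ (β i - 1) := by
  set P := cellIndicator R β
  set E := succInclusion R β
  set L := leadInclusion R β hβ
  have hST : fromRows Lᵀ (Eᵀ - Eᵀ * P * Lᵀ) * fromCols P E = 1 := by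
    simp only [fromRows_mul_fromCols, Matrix.sub_mul, Matrix.mul_assoc, L, P, E,
      leadInclusion_transpose_mul_cellIndicator, leadInclusion_transpose_mul_succInclusion,
      succInclusion_transpose_mul_self, Matrix.mul_one, Matrix.mul_zero, sub_self, sub_zero,
      fromBlocks_one]
  have hAT : blowUp R β F d * fromCols P E =
      fromCols P E * fromBlocks (F * diagonal (fun i => (β i : R)) - diagonal d) (F * Pᵀ * E) 0
        (-diagonal fun w : Σ i, Fin (β i - 1) => d w.1) := by
    rw [mul_fromCols, fromCols_mul_fromBlocks, blowUp, submatrix_fst_fst_eq_cellIndicator_mul]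
    congr 1
    · simp only [Matrix.sub_mul, Matrix.mul_sub, Matrix.mul_assoc, P,
        cellIndicator_transpose_mul_self, diagonal_mul_cellIndicator, Matrix.mul_zero, add_zero]
    · simp only [Matrix.sub_mul, Matrix.mul_neg, Matrix.mul_assoc, P, E,
        diagonal_mul_succInclusion, ← sub_eq_add_neg]
  rw [charpoly_eq_of_mul_eq_mul (card_sigma_eq_card_sum_pred β hβ) hST hAT,
    charpoly_fromBlocks_zero₂₁, charpoly_neg_diagonal_sigma]

end BlowUp

def cographCellAdj (m i j : ℕ) : Prop := if i = j then Even (m + i) else Odd (m + max i j)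

lemma cographCellAdj_succ {m i j : ℕ} : cographCellAdj (m + 1) i j ↔ ¬cographCellAdj m i j := by
  unfold cographCellAdj
  split_ifs <;> simp [add_right_comm m 1, Nat.even_add_one, Nat.odd_add_one]

lemma cographCellAdj_succ_of_lt_left {m i : ℕ} (hi : i < m) : cographCellAdj (m + 1) i m := by
  simp [cographCellAdj, hi.ne, max_eq_right hi.le, ← two_mul, add_right_comm m 1]

lemma cographCellAdj_succ_of_lt_right {m j : ℕ} (hj : j < m) : cographCellAdj (m + 1) m j := by
  simp [cographCellAdj, hj.ne', max_eq_left hj.le]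

lemma not_cographCellAdj_succ_self (m : ℕ) : ¬cographCellAdj (m + 1) m m := by
  simp [cographCellAdj]

lemma splitLast_symm_inl_fst_val (α : ℕ → ℕ) {m : ℕ} (y : Σ j : Fin m, Fin (α j)) :
    ((splitLast α m).symm (Sum.inl y)).1.val = y.1.val := rfl

lemma splitLast_symm_inr_fst_val (α : ℕ → ℕ) {m : ℕ} (a : Fin (α m)) :
    ((splitLast α m).symm (Sum.inr a)).1.val = m := rfl

theorem cographC_adj_iff (α : ℕ → ℕ) (m : ℕ) (u v : Σ j : Fin m, Fin (α j)) :
    (cographC α m).Adj u v ↔ u ≠ v ∧ cographCellAdj m u.1 v.1 := by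
  induction m with
  | zero => exact u.1.elim0
  | succ m ih =>
    obtain ⟨s, rfl⟩ := (splitLast α m).symm.surjective u
    obtain ⟨t, rfl⟩ := (splitLast α m).symm.surjective v
    rw [cographC, SimpleGraph.comap_adj, Equiv.apply_symm_apply, Equiv.apply_symm_apply,
      SimpleGraph.compl_adj, (splitLast α m).symm.injective.ne_iff]
    rcases s with y | a <;> rcases t with y' | b
    all_goals simp only [splitLast_symm_inl_fst_val, splitLast_symm_inr_fst_val]
    · simp +contextual [ih, cographCellAdj_succ]
    · simp [cographCellAdj_succ_of_lt_left y.1.isLt]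
    · simp [cographCellAdj_succ_of_lt_right y'.1.isLt]
    · simp [not_cographCellAdj_succ_self]

noncomputable def cographCellMatrix (m : ℕ) : Matrix (Fin m) (Fin m) ℝ :=
  of fun i j => if cographCellAdj m i j then 1 else 0

theorem adjMat_cographC (α : ℕ → ℕ) (m : ℕ) :
    adjMat (cographC α m) =
      blowUp ℝ (fun j : Fin m => α j) (cographCellMatrix m) fun i => cographCellMatrix m i i := by
  ext u v
  rcases eq_or_ne u v with rfl | huv
  · simp [adjMat, blowUp, cographC_adj_iff, cographCellMatrix]
  · simp [adjMat, blowUp, cographC_adj_iff, cographCellMatrix, huv]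

lemma cographCellAdj_two_mul_self (k i : ℕ) : cographCellAdj (2 * k) i i ↔ Even i := by
  simp [cographCellAdj, Nat.even_add]

theorem quotientMatrix_eq_cographCellMatrix (α : ℕ → ℕ) (k : ℕ) :
    quotientMatrix α k =
      cographCellMatrix (2 * k) * diagonal (fun i : Fin (2 * k) => (α i : ℝ)) - diagonal fun i => cographCellMatrix (2 * k) i i := by
  ext i j
  rcases eq_or_ne i j with rfl | hij
  · by_cases h : Even (i : ℕ) <;>
      simp [quotientMatrix, cographCellMatrix, cographCellAdj_two_mul_self, h, Nat.odd_add_one]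
  · have hij' : (i : ℕ) ≠ j := Fin.val_ne_of_ne hij
    have hcond : ((Even ((i : ℕ) + 1) ∧ j < i) ∨ (Even ((j : ℕ) + 1) ∧ i < j)) ↔
        Odd (2 * k + max (i : ℕ) j) := by
      simp only [Nat.odd_iff, Nat.even_iff, Fin.lt_def]
      omega
    simp [quotientMatrix, cographCellMatrix, cographCellAdj, hij, hij', hcond]

lemma prod_univ_fin_two_mul {M : Type*} [CommMonoid M] (k : ℕ) (f : ℕ → M) :
    ∏ i : Fin (2 * k), f i = ∏ i ∈ Finset.range k, f (2 * i) * f (2 * i + 1) := by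
  rw [Fin.prod_univ_eq_prod_range f]
  induction k with
  | zero => simp
  | succ k ih =>
    rw [mul_add_one, Finset.prod_range_succ, Finset.prod_range_succ, Finset.prod_range_succ, ih,
      mul_assoc]

theorem prod_cographCellMatrix_diag (α : ℕ → ℕ) (k : ℕ) :
    ∏ i : Fin (2 * k), (X + C (cographCellMatrix (2 * k) i i)) ^ (α i - 1) =
      X ^ (∑ i ∈ Finset.range k, (α (2 * i + 1) - 1)) *
        (X + 1) ^ (∑ i ∈ Finset.range k, (α (2 * i) - 1)) := by
  simp only [cographCellMatrix, of_apply, cographCellAdj_two_mul_self]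
  rw [prod_univ_fin_two_mul k fun i => (X + C (if Even i then (1 : ℝ) else 0)) ^ (α i - 1)]
  have hpair : ∀ i ∈ Finset.range k,
      (X + C (if Even (2 * i) then (1 : ℝ) else 0)) ^ (α (2 * i) - 1) *
        (X + C (if Even (2 * i + 1) then (1 : ℝ) else 0)) ^ (α (2 * i + 1) - 1) =
      (X + 1) ^ (α (2 * i) - 1) * X ^ (α (2 * i + 1) - 1) := by
    intro i _
    simp
  rw [Finset.prod_congr rfl hpair, Finset.prod_mul_distrib, Finset.prod_pow_eq_pow_sum,
    Finset.prod_pow_eq_pow_sum, mul_comm]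

theorem stmt18_general (k : ℕ) (α : ℕ → ℕ) (hα : ∀ i < 2 * k, 0 < α i) :
    (adjMat (cographC α (2 * k))).charpoly =
      Polynomial.X ^ (∑ i ∈ Finset.range k, (α (2 * i + 1) - 1)) *
        (Polynomial.X + 1) ^ (∑ i ∈ Finset.range k, (α (2 * i) - 1)) *
        (quotientMatrix α k).charpoly := by
  rw [adjMat_cographC, charpoly_blowUp ℝ _ (fun i : Fin (2 * k) => hα i i.isLt),
    ← quotientMatrix_eq_cographCellMatrix, prod_cographCellMatrix_diag, mul_comm]

/-- `Ψ(x) = x^{∑ (α_{2i}-1)} (x+1)^{∑ (α_{2i-1}-1)} Ψ_π(x)`, where `Ψ` and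
`Ψ_π` are the characteristic polynomials of the adjacency matrix `A` and of the quotient
matrix `Q_π(G)`. -/
theorem stmt18 (k : ℕ) (hk : 1 ≤ k) (α : ℕ → ℕ) (hα : ∀ i < 2 * k, 0 < α i) :
    (adjMat (cographC α (2 * k))).charpoly =
      Polynomial.X ^ (∑ i ∈ Finset.range k, (α (2 * i + 1) - 1)) *
        (Polynomial.X + 1) ^ (∑ i ∈ Finset.range k, (α (2 * i) - 1)) *
        (quotientMatrix α k).charpoly :=
  stmt18_general k α hα
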